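/- With U_B as in the polarization-based fixed-apparatus setup, U_B applied to the state (1/√2)(|H⟩_a|V⟩_b − i|V⟩_a|H⟩_b) equals |H⟩_c|V⟩_d; i.e., Eve's reversed state deterministically triggers the (+, 0) detector. -/

import Mathlib

open Complex

local notation "⟪" x ", " y "⟫" => @inner ℂ _ _ x y

noncomputable def tp (x y : EuclideanSpace ℂ (Fin 3)) :
    EuclideanSpace ℂ (Fin 3 × Fin 3) :=
  (WithLp.equiv 2 ((Fin 3 × Fin 3) → ℂ)).symm fun p => x p.1 * y p.2

noncomputable def Vst : EuclideanSpace ℂ (Fin 3) := EuclideanSpace.single 0 1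
noncomputable def Hst : EuclideanSpace ℂ (Fin 3) := EuclideanSpace.single 1 1
noncomputable def Wst : EuclideanSpace ℂ (Fin 3) := EuclideanSpace.single 2 1

lemma inv_sqrt_two_sq_complex : ((Real.sqrt 2 : ℂ)⁻¹) ^ 2 = 2⁻¹ := by
  rw [← ofReal_inv, ← ofReal_pow]
  norm_num

/-- The two beam-splitter amplitudes of `x'` add up while those of `y'` cancel. -/
lemma LinearMap.map_inv_sqrt_two_smul_sub_I_smul {M N : Type*} [AddCommGroup M] [Module ℂ M]
    [AddCommGroup N] [Module ℂ N] (U : M →ₗ[ℂ] N) {x y : M} {x' y' : N}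
    (hx : U x = (Real.sqrt 2 : ℂ)⁻¹ • (x' + I • y'))
    (hy : U y = (Real.sqrt 2 : ℂ)⁻¹ • (I • x' + y')) :
    U ((Real.sqrt 2 : ℂ)⁻¹ • (x - I • y)) = x' := by
  rw [map_smul, map_sub, map_smul, hx, hy]
  match_scalars
  · linear_combination (1 - I ^ 2) * inv_sqrt_two_sq_complex - (1 / 2 : ℂ) * I_sq
  · ring

theorem stmt7_general
    (PR : EuclideanSpace ℂ (Fin 3) →ₗ[ℂ] EuclideanSpace ℂ (Fin 3))
    (U : EuclideanSpace ℂ (Fin 3 × Fin 3) →ₗ[ℂ] EuclideanSpace ℂ (Fin 3 × Fin 3))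
    (hUa : ∀ φ ∈ ({Hst, Wst} : Set (EuclideanSpace ℂ (Fin 3))),
      U (tp φ Vst) = (Real.sqrt 2 : ℂ)⁻¹ • (tp φ Vst + I • tp Vst (PR φ)))
    (hUb : ∀ φ ∈ ({Hst, Wst} : Set (EuclideanSpace ℂ (Fin 3))),
      U (tp Vst φ) = (Real.sqrt 2 : ℂ)⁻¹ • (I • tp φ Vst + tp Vst (PR φ))) :
    U ((Real.sqrt 2 : ℂ)⁻¹ • (tp Hst Vst - I • tp Vst Hst)) = tp Hst Vst :=
  U.map_inv_sqrt_two_smul_sub_I_smul (hUa Hst (Set.mem_insert _ _)) (hUb Hst (Set.mem_insert _ _))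

/-- Eve's reversed state `(1/√2)(|H⟩_a|V⟩_b − i|V⟩_a|H⟩_b)` is mapped by `U_B`
exactly to `|H⟩_c|V⟩_d`, deterministically triggering the `(+,0)` detector. -/
theorem stmt7
    (PR : EuclideanSpace ℂ (Fin 3) →ₗ[ℂ] EuclideanSpace ℂ (Fin 3))
    (hPR : ∀ x y, ⟪PR x, PR y⟫ = ⟪x, y⟫) (hPRV : PR Vst = Vst)
    (U : EuclideanSpace ℂ (Fin 3 × Fin 3) →ₗ[ℂ] EuclideanSpace ℂ (Fin 3 × Fin 3))
    (hUa : ∀ φ ∈ ({Hst, Wst} : Set (EuclideanSpace ℂ (Fin 3))),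
      U (tp φ Vst) = (Real.sqrt 2 : ℂ)⁻¹ • (tp φ Vst + I • tp Vst (PR φ)))
    (hUb : ∀ φ ∈ ({Hst, Wst} : Set (EuclideanSpace ℂ (Fin 3))),
      U (tp Vst φ) = (Real.sqrt 2 : ℂ)⁻¹ • (I • tp φ Vst + tp Vst (PR φ))) :
    U ((Real.sqrt 2 : ℂ)⁻¹ • (tp Hst Vst - I • tp Vst Hst)) = tp Hst Vst :=
  stmt7_general PR U hUa hUb
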